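/- arXiv:1312.7324 — 9 statements merged into one kernel-verified Lean document; each statement's English description precedes it below -/
import Mathlib

section
/- Let X be a compact metric space and f : X → X continuous. Then x ∉ CR(f) if and only if there exists an open set U ⊆ X with x ∉ U, f(x) ∈ U, and f(closure U) ⊆ U. -/
/-!
If `x` is not chain recurrent, then for some `ε > 0` the set `U` of points reachable from `x`
by `ε`-chains misses `x`. This `U` is a union of `ε`-balls around the images of its points
(and of `x`), hence open and contains `f x`; by continuity `f` maps `closure U` into `U`.
Conversely, `f x` together with `f '' closure U` is a compact subset of the open set `U`, so
some `δ`-thickening of it still lies in `U`, and then every `δ`-chain from `x` stays in `U`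
and cannot return to `x`.
-/

open Metric Set

variable {X : Type*} [MetricSpace X]

/-- The set of chain recurrent points of `f`. -/
def ChainRec (f : X → X) : Set X :=
  {x | ∀ ε > (0:ℝ), ∃ n : ℕ, 0 < n ∧ ∃ c : ℕ → X, c 0 = x ∧ c n = x ∧
    ∀ i < n, dist (f (c i)) (c (i+1)) < ε}

/-- The chain recurrent set of `f` restricted to a subset `A` (chains lie in `A`),
    i.e. the chain recurrent set of `f` as a self-map of the subspace `A`. -/
def ChainRecIn (f : X → X) (A : Set X) : Set X :=
  {x | x ∈ A ∧ ∀ ε > (0:ℝ), ∃ n : ℕ, 0 < n ∧ ∃ c : ℕ → X, (∀ i ≤ n, c i ∈ A) ∧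
    c 0 = x ∧ c n = x ∧ ∀ i < n, dist (f (c i)) (c (i+1)) < ε}

namespace ChainRec

variable {f : X → X} {ε : ℝ} {x : X}

def chainReach (f : X → X) (ε : ℝ) (x : X) : Set X :=
  {y | ∃ n : ℕ, 0 < n ∧ ∃ c : ℕ → X, c 0 = x ∧ c n = y ∧
    ∀ i < n, dist (f (c i)) (c (i+1)) < ε}

theorem mem_chainRec_iff : x ∈ ChainRec f ↔ ∀ ε > 0, x ∈ chainReach f ε x :=
  Iff.rfl

theorem exists_chain_of_mem_insert_chainReach {z : X} (hz : z ∈ insert x (chainReach f ε x)) :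
    ∃ n : ℕ, ∃ c : ℕ → X, c 0 = x ∧ c n = z ∧ ∀ i < n, dist (f (c i)) (c (i+1)) < ε := by
  rcases hz with rfl | ⟨n, -, c, hc⟩
  · exact ⟨0, fun _ => z, rfl, rfl, by simp⟩
  · exact ⟨n, c, hc⟩

theorem ball_subset_chainReach {z : X} (hz : z ∈ insert x (chainReach f ε x)) :
    ball (f z) ε ⊆ chainReach f ε x := by
  obtain ⟨n, c, hc0, hcn, hc⟩ := exists_chain_of_mem_insert_chainReach hz
  intro y hy
  refine ⟨n + 1, n.succ_pos, fun i => if i ≤ n then c i else y, by simp [hc0], by simp, ?_⟩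
  intro i hi
  rcases Nat.lt_succ_iff_lt_or_eq.mp hi with hin | rfl
  · simpa [hin.le, Nat.succ_le_of_lt hin] using hc i hin
  · simpa [hcn, dist_comm] using hy

theorem chainReach_eq_biUnion_ball :
    chainReach f ε x = ⋃ z ∈ insert x (chainReach f ε x), ball (f z) ε := by
  refine Subset.antisymm ?_ (iUnion₂_subset fun z hz => ball_subset_chainReach hz)
  rintro y ⟨n, hn, c, hc0, hcn, hc⟩
  obtain ⟨m, rfl⟩ := Nat.exists_eq_add_of_lt hn
  have hcm : c m ∈ insert x (chainReach f ε x) := by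
    rcases m.eq_zero_or_pos with rfl | hm
    · exact hc0 ▸ mem_insert _ _
    · exact mem_insert_of_mem _ ⟨m, hm, c, hc0, rfl, fun i hi => hc i (by omega)⟩
  exact mem_biUnion hcm (by simpa [← hcn, dist_comm] using hc m (by omega))

theorem isOpen_chainReach : IsOpen (chainReach f ε x) := by
  rw [chainReach_eq_biUnion_ball]
  exact isOpen_biUnion fun _ _ => isOpen_ball

theorem apply_mem_chainReach (hε : 0 < ε) : f x ∈ chainReach f ε x :=
  ball_subset_chainReach (mem_insert x _) (mem_ball_self hε)

theorem image_closure_chainReach_subset (hf : Continuous f) (hε : 0 < ε) :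
    f '' closure (chainReach f ε x) ⊆ chainReach f ε x := by
  rintro _ ⟨z, hz, rfl⟩
  obtain ⟨δ, hδ, hfδ⟩ := Metric.continuous_iff.mp hf z ε hε
  obtain ⟨y, hy, hyz⟩ := Metric.mem_closure_iff.mp hz δ hδ
  exact ball_subset_chainReach (mem_insert_of_mem x hy)
    (mem_ball'.mpr (hfδ y (by rwa [dist_comm])))

theorem chainReach_subset {S : Set X} (hS : ∀ z ∈ insert x S, ball (f z) ε ⊆ S) :
    chainReach f ε x ⊆ S := by
  rintro _ ⟨n, hn, c, hc0, rfl, hc⟩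
  have hmem : ∀ i, 0 < i → i ≤ n → c i ∈ S := by
    intro i
    induction i with
    | zero => exact fun h => absurd h (lt_irrefl 0)
    | succ j ih =>
      intro _ hjn
      have hcj : c j ∈ insert x S := by
        rcases j.eq_zero_or_pos with rfl | hj
        · exact hc0 ▸ mem_insert _ _
        · exact mem_insert_of_mem _ (ih hj (by omega))
      exact hS _ hcj (mem_ball'.mpr (hc j (by omega)))
  exact hmem n hn le_rfl

theorem exists_chainReach_subset [CompactSpace X] (hf : Continuous f) {U : Set X}
    (hU : IsOpen U) (hfx : f x ∈ U) (hfU : f '' closure U ⊆ U) :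
    ∃ δ > 0, chainReach f δ x ⊆ U := by
  set K := insert (f x) (f '' closure U)
  have hK : IsCompact K := (isClosed_closure.isCompact.image hf).insert (f x)
  obtain ⟨δ, hδ, hKδ⟩ := hK.exists_thickening_subset_open hU (insert_subset hfx hfU)
  refine ⟨δ, hδ, chainReach_subset fun z hz => ?_⟩
  have hfz : f z ∈ K := by
    rcases hz with rfl | hz
    · exact mem_insert _ _
    · exact mem_insert_of_mem _ (mem_image_of_mem f (subset_closure hz))
  exact (ball_subset_thickening hfz δ).trans hKδ

end ChainRec

open ChainRec in
theorem stmt0 [CompactSpace X] (f : X → X) (hf : Continuous f) (x : X) :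
    x ∉ ChainRec f ↔
      ∃ U : Set X, IsOpen U ∧ x ∉ U ∧ f x ∈ U ∧ f '' closure U ⊆ U := by
  constructor
  · intro hx
    obtain ⟨ε, hε, hxε⟩ : ∃ ε > 0, x ∉ chainReach f ε x := by
      simpa [mem_chainRec_iff] using hx
    exact ⟨chainReach f ε x, isOpen_chainReach, hxε, apply_mem_chainReach hε,
      image_closure_chainReach_subset hf hε⟩
  · rintro ⟨U, hU, hxU, hfx, hfU⟩ hx
    obtain ⟨δ, hδ, hδU⟩ := exists_chainReach_subset hf hU hfx hfU
    exact hxU (hδU (mem_chainRec_iff.mp hx δ hδ))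
end

section
/- For every compact nonempty metric space X and every continuous map f : X → X, the set CR(f) of chain recurrent points is nonempty. -/
/-! Every ω-limit point `y` of an orbit is chain recurrent: if the orbit of `x` passes
within `δ` of `y` at times `k` and `k' ≥ k + 2`, then replacing the two endpoints of the
orbit segment from `f^[k] x` to `f^[k'] x` by `y` gives an `ε`-chain from `y` to `y`, where
`δ ≤ ε` is chosen by continuity of `f` at `y`. By compactness, every orbit has an
ω-limit point. -/

open Metric Set

variable {X : Type*} [MetricSpace X]

theorem exists_chain_of_orbit_near_start_and_end (f : X → X) {y z : X} {N : ℕ} (hN : 2 ≤ N)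
    {ε : ℝ} (hε : 0 < ε) (hstart : dist (f y) (f z) < ε) (hend : dist (f^[N] z) y < ε) :
    ∃ n : ℕ, 0 < n ∧ ∃ c : ℕ → X, c 0 = y ∧ c n = y ∧
      ∀ i < n, dist (f (c i)) (c (i+1)) < ε := by
  refine ⟨N, by omega, fun i => if i = 0 ∨ i = N then y else f^[i] z, by simp, by simp, ?_⟩
  intro i hi
  rcases Nat.eq_zero_or_pos i with rfl | hipos
  · simpa [show 1 ≠ N by omega] using hstart
  rcases eq_or_ne (i + 1) N with hlast | hlast
  · rw [← hlast, Function.iterate_succ_apply'] at hend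
    simpa [hipos.ne', hlast, hi.ne] using hend
  · simpa [hipos.ne', hlast, hi.ne, ← Function.iterate_succ_apply' f] using hε

theorem mem_chainRec_of_mapClusterPt {f : X → X} {x y : X} (hf : ContinuousAt f y)
    (hy : MapClusterPt y Filter.atTop (fun k => f^[k] x)) : y ∈ ChainRec f := by
  intro ε hε
  obtain ⟨δ, hδ, hfδ⟩ := Metric.continuousAt_iff.mp hf ε hε
  have hnear : ∃ᶠ k in Filter.atTop, dist (f^[k] x) y < min δ ε :=
    hy.frequently (ball_mem_nhds y (lt_min hδ hε))
  obtain ⟨k, -, hk⟩ := Filter.frequently_atTop.mp hnear 0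
  obtain ⟨k', hkk', hk'⟩ := Filter.frequently_atTop.mp hnear (k + 2)
  refine exists_chain_of_orbit_near_start_and_end f (z := f^[k] x) (N := k' - k) (by omega) hε
    (dist_comm (f y) _ ▸ hfδ (hk.trans_le (min_le_left _ _))) ?_
  rw [← Function.iterate_add_apply, Nat.sub_add_cancel (by omega)]
  exact hk'.trans_le (min_le_right _ _)

theorem stmt1 [CompactSpace X] [Nonempty X] (f : X → X) (hf : Continuous f) :
    (ChainRec f).Nonempty := by
  obtain ⟨x⟩ := ‹Nonempty X›
  obtain ⟨y, hy⟩ := exists_clusterPt_of_compactSpace (Filter.map (fun k => f^[k] x) Filter.atTop)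
  exact ⟨y, mem_chainRec_of_mapClusterPt hf.continuousAt hy⟩
end

section
/- Let X be a compact metric space. The set-valued map f ↦ CR(f), from C(X,X) (with the uniform metric) to the space of nonempty closed subsets of X with the Hausdorff metric, is upper semi-continuous: for every f and every open set V ⊇ CR(f) there is δ > 0 such that every continuous g with sup-distance from f less than δ satisfies CR(g) ⊆ V. -/
open Metric Set

variable {X : Type*} [MetricSpace X]

/-!
`CR(f)` is the intersection over `ε > 0` of the sets `EpsChainRec f ε` of points lying on a
closed `ε`-chain. Moving the points of an `ε`-chain by at most `η` and the map by at most `η'`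
gives an `(η' + ε + η)`-chain. For continuous `f` this gives
`closure (EpsChainRec f ε) ⊆ EpsChainRec f (2ε)`, so `CR(f)` is an intersection of a decreasing
family of closed sets, and compactness of `X \ V` yields one `ε` with `EpsChainRec f ε ⊆ V`.
A closed `ε/2`-chain of any map `ε/2`-close to `f` is a closed `ε`-chain of `f`, so its points
lie in `V`.
-/

def IsEpsChain (f : X → X) (ε : ℝ) (n : ℕ) (c : ℕ → X) : Prop :=
  ∀ i < n, dist (f (c i)) (c (i + 1)) < ε

def EpsChainRec (f : X → X) (ε : ℝ) : Set X :=
  {x | ∃ n : ℕ, 0 < n ∧ ∃ c : ℕ → X, c 0 = x ∧ c n = x ∧ IsEpsChain f ε n c}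

lemma mem_chainRec_iff {f : X → X} {x : X} :
    x ∈ ChainRec f ↔ ∀ ε > 0, x ∈ EpsChainRec f ε :=
  Iff.rfl

lemma EpsChainRec.mono (f : X → X) {ε ε' : ℝ} (h : ε ≤ ε') :
    EpsChainRec f ε ⊆ EpsChainRec f ε' := by
  rintro x ⟨n, hn, c, hc0, hcn, hc⟩
  exact ⟨n, hn, c, hc0, hcn, fun i hi => (hc i hi).trans_le h⟩

lemma IsEpsChain.perturb {f g : X → X} {ε η η' : ℝ} {n : ℕ} {c c' : ℕ → X}
    (hc : IsEpsChain f ε n c) (hfg : ∀ i ≤ n, dist (g (c' i)) (f (c i)) ≤ η')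
    (hcc : ∀ i ≤ n, dist (c i) (c' i) ≤ η) :
    IsEpsChain g (η' + ε + η) n c' := by
  intro i hi
  calc dist (g (c' i)) (c' (i + 1))
      ≤ dist (g (c' i)) (f (c i)) + dist (f (c i)) (c (i + 1)) + dist (c (i + 1)) (c' (i + 1)) :=
        dist_triangle4 _ _ _ _
    _ < η' + ε + η := by linarith [hfg i hi.le, hc i hi, hcc (i + 1) hi]

lemma closure_epsChainRec_subset {f : X → X} (hf : Continuous f) {ε : ℝ} (hε : 0 < ε) :
    closure (EpsChainRec f ε) ⊆ EpsChainRec f (2 * ε) := by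
  classical
  intro x hx
  obtain ⟨δ, hδ, hfδ⟩ := Metric.continuous_iff.mp hf x (ε / 2) (half_pos hε)
  obtain ⟨y, ⟨n, hn, c, hc0, hcn, hc⟩, hxy⟩ :=
    Metric.mem_closure_iff.mp hx (min δ (ε / 2)) (lt_min hδ (half_pos hε))
  -- Replacing every occurrence of `y` by `x` keeps both endpoints equal and moves nothing else.
  set c' : ℕ → X := fun i => if c i = y then x else c i
  have hmove : ∀ i, c' i = c i ∨ (c i = y ∧ c' i = x) := fun i => by
    by_cases h : c i = y <;> simp [c', h]
  have hchain : IsEpsChain f (ε / 2 + ε + ε / 2) n c' := by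
    refine hc.perturb (fun i _ => ?_) (fun i _ => ?_) <;> rcases hmove i with h | ⟨h, h'⟩
    · rw [h, dist_self]; positivity
    · rw [h, h', dist_comm]
      exact (hfδ y (by rw [dist_comm]; exact hxy.trans_le (min_le_left _ _))).le
    · rw [h, dist_self]; positivity
    · rw [h, h', dist_comm]
      exact hxy.le.trans (min_le_right _ _)
  refine ⟨n, hn, c', by simp [c', hc0], by simp [c', hcn], ?_⟩
  convert hchain using 1
  ring

lemma exists_epsChainRec_subset [CompactSpace X] {f : X → X} (hf : Continuous f) {V : Set X}
    (hV : IsOpen V) (hCR : ChainRec f ⊆ V) : ∃ ε > 0, EpsChainRec f ε ⊆ V := by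
  set U : ℕ → Set X := fun n => (closure (EpsChainRec f (1 / (n + 1))))ᶜ
  have hU_mono : Monotone U := fun m n hmn =>
    compl_subset_compl.mpr <| closure_mono <| EpsChainRec.mono f <|
      one_div_le_one_div_of_le (by positivity) (by gcongr)
  have hcover : Vᶜ ⊆ ⋃ n, U n := by
    intro x hxV
    obtain ⟨ε, hε, hx⟩ : ∃ ε > 0, x ∉ EpsChainRec f ε := by
      simpa [mem_chainRec_iff] using fun h => hxV (hCR h)
    obtain ⟨n, hn⟩ := exists_nat_one_div_lt (half_pos hε)
    refine mem_iUnion.mpr ⟨n, fun hcl => hx ?_⟩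
    refine EpsChainRec.mono f ?_ (closure_epsChainRec_subset hf (by positivity) hcl)
    linarith
  obtain ⟨n, hn⟩ := hV.isClosed_compl.isCompact.elim_directed_cover U
    (fun n => isClosed_closure.isOpen_compl) hcover hU_mono.directed_le
  exact ⟨1 / (n + 1), by positivity, fun x hx =>
    by_contra fun hxV => hn hxV (subset_closure hx)⟩

lemma epsChainRec_subset_of_dist_lt {f g : X → X} {δ : ℝ} (hfg : ∀ x, dist (f x) (g x) < δ)
    (ε : ℝ) : EpsChainRec g ε ⊆ EpsChainRec f (δ + ε) := by
  rintro x ⟨n, hn, c, hc0, hcn, hc⟩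
  refine ⟨n, hn, c, hc0, hcn, ?_⟩
  simpa using hc.perturb (fun i _ => (hfg (c i)).le) (fun i _ => (dist_self (c i)).le)

theorem stmt5 [CompactSpace X] (f : X → X) (hf : Continuous f) (V : Set X)
    (hV : IsOpen V) (hCR : ChainRec f ⊆ V) :
    ∃ δ > (0:ℝ), ∀ g : X → X, Continuous g →
      (∀ x, dist (f x) (g x) < δ) → ChainRec g ⊆ V := by
  obtain ⟨ε, hε, hεV⟩ := exists_epsChainRec_subset hf hV hCR
  refine ⟨ε / 2, half_pos hε, fun g _ hfg x hx => hεV ?_⟩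
  have hxg : x ∈ EpsChainRec g (ε / 2) := mem_chainRec_iff.mp hx _ (half_pos hε)
  simpa using epsChainRec_subset_of_dist_lt hfg _ hxg
end

section
/- Let X be a compact metric space, G ⊆ X a closed subset, r : X → G a retraction (continuous with r|G = id), and f : G → G continuous. Then the chain recurrent set of f (as a self-map of G) equals the chain recurrent set of the composition f ∘ r : X → X, i.e., CR(f) = CR(f ∘ r) as subsets of X. -/
open Metric Set

variable {X : Type*} [MetricSpace X]

/-- A chain returning to `x` ends with a point within `ε` of `g (c (n - 1))`. -/
theorem chainRec_subset_closure_range (g : X → X) : ChainRec g ⊆ closure (range g) := by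
  intro x hx
  rw [Metric.mem_closure_iff]
  intro ε hε
  obtain ⟨n, hn, c, -, hcn, hc⟩ := hx ε hε
  obtain ⟨m, rfl⟩ := Nat.exists_eq_succ_of_ne_zero hn.ne'
  refine ⟨g (c m), mem_range_self _, ?_⟩
  rw [dist_comm, ← hcn]
  exact hc m m.lt_succ_self

theorem chainRecIn_subset_chainRec_comp {A : Set X} (f r : X → X) (hret : ∀ x ∈ A, r x = x) :
    ChainRecIn f A ⊆ ChainRec (f ∘ r) := by
  rintro x ⟨-, hx⟩ ε hε
  obtain ⟨n, hn, c, hcA, hc0, hcn, hc⟩ := hx ε hε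
  refine ⟨n, hn, c, hc0, hcn, fun i hi => ?_⟩
  rw [Function.comp_apply, hret _ (hcA i hi.le)]
  exact hc i hi

/-- Projecting an `(f ∘ r)`-chain by `r` gives an `f`-chain in `A`, since `r ∘ f ∘ r = f ∘ r`;
uniform continuity of `r` controls the jumps. -/
theorem mem_chainRecIn_of_mem_chainRec_comp {A : Set X} {f r : X → X}
    (hr : UniformContinuous r) (hrA : ∀ x, r x ∈ A) (hret : ∀ x ∈ A, r x = x)
    (hfA : MapsTo f A A) {x : X} (hxA : x ∈ A) (hx : x ∈ ChainRec (f ∘ r)) :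
    x ∈ ChainRecIn f A := by
  refine ⟨hxA, fun ε hε => ?_⟩
  obtain ⟨δ, hδ, hrδ⟩ := Metric.uniformContinuous_iff.mp hr ε hε
  obtain ⟨n, hn, c, hc0, hcn, hc⟩ := hx δ hδ
  refine ⟨n, hn, r ∘ c, fun i _ => hrA _, ?_, ?_, fun i hi => ?_⟩
  · simp only [Function.comp_apply, hc0, hret x hxA]
  · simp only [Function.comp_apply, hcn, hret x hxA]
  · have h := hrδ (hc i hi)
    rwa [Function.comp_apply, hret _ (hfA (hrA _))] at h

theorem stmt6_general [CompactSpace X] (G : Set X) (hG : IsClosed G)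
    (r : X → X) (hr : Continuous r) (hrG : ∀ x, r x ∈ G) (hret : ∀ x ∈ G, r x = x)
    (f : X → X) (hfG : MapsTo f G G) :
    ChainRecIn f G = ChainRec (f ∘ r) := by
  refine (chainRecIn_subset_chainRec_comp f r hret).antisymm fun x hx => ?_
  have hrange : range (f ∘ r) ⊆ G := range_subset_iff.mpr fun y => hfG (hrG y)
  have hxG : x ∈ G := hG.closure_subset_iff.mpr hrange (chainRec_subset_closure_range _ hx)
  exact mem_chainRecIn_of_mem_chainRec_comp (CompactSpace.uniformContinuous_of_continuous hr)
    hrG hret hfG hxG hx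

theorem stmt6 [CompactSpace X] (G : Set X) (hG : IsClosed G)
    (r : X → X) (hr : Continuous r) (hrG : ∀ x, r x ∈ G) (hret : ∀ x ∈ G, r x = x)
    (f : X → X) (hf : ContinuousOn f G) (hfG : MapsTo f G G) :
    ChainRecIn f G = ChainRec (f ∘ r) :=
  stmt6_general G hG r hr hrG hret f hfG
end

section
/- Let X be a compact metric space and f : X → X continuous. Suppose there are open sets U_0 ⊆ U_1 ⊆ … ⊆ U_n and closed sets K_0 ⊆ K_1 ⊆ … ⊆ K_n with K_i ⊆ U_i and f(U_i) ⊆ K_i for all i = 0,…,n. Then CR(f) ⊆ (X \ U_n) ∪ (K_n \ U_{n-1}) ∪ (K_{n-1} \ U_{n-2}) ∪ … ∪ (K_1 \ U_0) ∪ K_0. -/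
open Metric Set

variable {X : Type*} [MetricSpace X]

/-! A compact `K` inside an open `U` with `f '' U ⊆ K` is an attractor block: a `δ`-chain
starting in `U` stays in `U` as soon as `thickening δ K ⊆ U`, and its last step lands within
`ε` of `K`, so a chain recurrent point of `U` lies in the closed set `K`. Applied to every pair
`(U i, K i)`, this places a chain recurrent `x` in `K i \ U (i - 1)` for the least `i` with
`x ∈ U i`. -/

theorem chain_mem_of_thickening_subset {f : X → X} {U K : Set X} {δ : ℝ}
    (hδ : thickening δ K ⊆ U) (hfUK : MapsTo f U K) {m : ℕ} {c : ℕ → X}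
    (hc : ∀ i < m, dist (f (c i)) (c (i+1)) < δ) (h0 : c 0 ∈ U) :
    ∀ j ≤ m, c j ∈ U := by
  intro j
  induction j with
  | zero => exact fun _ ↦ h0
  | succ k ih =>
    intro hk
    refine hδ (mem_thickening_iff.2 ⟨f (c k), hfUK (ih (by omega)), ?_⟩)
    rw [dist_comm]
    exact hc k (by omega)

theorem ChainRec.mem_of_mem_of_mapsTo {f : X → X} {U K : Set X} (hK : IsCompact K)
    (hU : IsOpen U) (hKU : K ⊆ U) (hfUK : MapsTo f U K) {x : X} (hx : x ∈ ChainRec f)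
    (hxU : x ∈ U) : x ∈ K := by
  obtain ⟨δ, hδ, hthick⟩ := hK.exists_thickening_subset_open hU hKU
  rw [← hK.isClosed.closure_eq, Metric.mem_closure_iff]
  intro ε hε
  obtain ⟨m, hm, c, hc0, hcm, hchain⟩ := hx (min ε δ) (lt_min hε hδ)
  have hcU := chain_mem_of_thickening_subset hthick hfUK
    (fun i hi ↦ (hchain i hi).trans_le (min_le_right _ _)) (hc0 ▸ hxU)
  obtain ⟨m, rfl⟩ := Nat.exists_eq_add_one_of_ne_zero hm.ne'
  refine ⟨f (c m), hfUK (hcU m (by omega)), ?_⟩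
  rw [← hcm, dist_comm]
  exact (hchain m (by omega)).trans_le (min_le_left _ _)

theorem mem_compl_union_diff_of_forall_mem_imp {α : Type*} {x : α} (U K : ℕ → Set α) (n : ℕ)
    (h : ∀ i ≤ n, x ∈ U i → x ∈ K i) :
    x ∈ (U n)ᶜ ∪ K 0 ∪ ⋃ i ∈ Finset.range n, (K (i+1) \ U i) := by
  induction n with
  | zero => by_cases hx : x ∈ U 0 <;> simp [hx, h 0 le_rfl]
  | succ n ih =>
    by_cases hxn : x ∈ U n
    · rcases ih (fun i hi ↦ h i (by omega)) with (hxn' | hx0) | hxi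
      · exact absurd hxn hxn'
      · exact Or.inl (Or.inr hx0)
      · refine Or.inr (biUnion_mono (fun i hi ↦ ?_) (fun _ _ ↦ subset_rfl) hxi)
        simp only [Finset.coe_range, mem_Iio] at hi ⊢
        omega
    · by_cases hxn1 : x ∈ U (n + 1)
      · exact Or.inr (mem_biUnion (Finset.mem_range.2 n.lt_succ_self) ⟨h _ le_rfl hxn1, hxn⟩)
      · exact Or.inl (Or.inl hxn1)

theorem stmt7_general [CompactSpace X] (f : X → X) (n : ℕ)
    (U K : ℕ → Set X)
    (hUopen : ∀ i ≤ n, IsOpen (U i)) (hKclosed : ∀ i ≤ n, IsClosed (K i))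
    (hKU : ∀ i ≤ n, K i ⊆ U i) (hfUK : ∀ i ≤ n, f '' U i ⊆ K i) :
    ChainRec f ⊆ (U n)ᶜ ∪ K 0 ∪ ⋃ i ∈ Finset.range n, (K (i+1) \ U i) := fun _ hx ↦
  mem_compl_union_diff_of_forall_mem_imp U K n fun i hi ↦
    ChainRec.mem_of_mem_of_mapsTo (hKclosed i hi).isCompact (hUopen i hi) (hKU i hi)
      (mapsTo_iff_image_subset.2 (hfUK i hi)) hx

theorem stmt7 [CompactSpace X] (f : X → X) (hf : Continuous f) (n : ℕ)
    (U K : ℕ → Set X)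
    (hUopen : ∀ i ≤ n, IsOpen (U i)) (hKclosed : ∀ i ≤ n, IsClosed (K i))
    (hUmono : ∀ i < n, U i ⊆ U (i+1)) (hKmono : ∀ i < n, K i ⊆ K (i+1))
    (hKU : ∀ i ≤ n, K i ⊆ U i) (hfUK : ∀ i ≤ n, f '' U i ⊆ K i) :
    ChainRec f ⊆ (U n)ᶜ ∪ K 0 ∪ ⋃ i ∈ Finset.range n, (K (i+1) \ U i) :=
  stmt7_general f n U K hUopen hKclosed hKU hfUK
end

section
/- Let X and Y be compact metric spaces. The set C_0(X,Y) of continuous maps f : X → Y all of whose fibers f^{-1}(y) are zero-dimensional is a Gδ subset of the space C(X,Y) with the uniform metric. -/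
/-!
Let `P ⊆ C(X, Y) × NonemptyCompacts X` consist of the pairs `(f, K)` with `K` preconnected and
`f` constant on `K`; in the Vietoris topology `P` is closed. The fibres of `f` are
zero-dimensional iff every `K` with `(f, K) ∈ P` is a singleton. The singletons form a closed,
hence Gδ, subset of the metrizable hyperspace `NonemptyCompacts X`, which is compact. Projecting
along a compact factor is a closed map, so the set of `f` all of whose `P`-sections lie in a
fixed Gδ set is Gδ.
-/

open Set

open TopologicalSpace

section Projection

variable {A B : Type*} [TopologicalSpace A] [TopologicalSpace B] [CompactSpace B]

theorem isOpen_setOf_forall_imp_mem {P : Set (A × B)} (hP : IsClosed P) {W : Set B}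
    (hW : IsOpen W) : IsOpen {a | ∀ b, (a, b) ∈ P → b ∈ W} := by
  have hcompl : {a | ∀ b, (a, b) ∈ P → b ∈ W}ᶜ = Prod.fst '' (P ∩ Prod.snd ⁻¹' Wᶜ) := by
    ext a
    simp [and_comm]
  rw [← isClosed_compl_iff, hcompl]
  exact isClosedMap_fst_of_compactSpace _ (hP.inter (hW.isClosed_compl.preimage continuous_snd))

theorem isGδ_setOf_forall_imp_mem {P : Set (A × B)} (hP : IsClosed P) {Z : Set B}
    (hZ : IsGδ Z) : IsGδ {a | ∀ b, (a, b) ∈ P → b ∈ Z} := by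
  obtain ⟨T, hT_open, hT_count, rfl⟩ := hZ
  have hsInter : {a | ∀ b, (a, b) ∈ P → b ∈ ⋂₀ T} =
      ⋂ W ∈ T, {a | ∀ b, (a, b) ∈ P → b ∈ W} := by
    ext a
    simp only [mem_ofPred_eq, mem_sInter, mem_iInter]
    exact ⟨fun h W hW b hb => h b hb W hW, fun h b hb W hW => h W hW b hb⟩
  rw [hsInter]
  exact IsGδ.biInter_of_isOpen hT_count fun W hW => isOpen_setOf_forall_imp_mem hP (hT_open W hW)

end Projection

theorem IsClosed.isClosed_connectedComponentIn {X : Type*} [TopologicalSpace X] {F : Set X}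
    (hF : IsClosed F) (x : X) : IsClosed (connectedComponentIn F x) := by
  by_cases hx : x ∈ F
  · exact isClosed_of_closure_subset
      (isPreconnected_connectedComponentIn.closure.subset_connectedComponentIn
        (subset_closure (mem_connectedComponentIn hx))
        (closure_minimal (connectedComponentIn_subset _ _) hF))
  · rw [connectedComponentIn_eq_empty hx]
    exact isClosed_empty

namespace TopologicalSpace.NonemptyCompacts

variable {X : Type*} [TopologicalSpace X]

theorem isClosed_setOf_subsingleton [T2Space X] :
    IsClosed {K : NonemptyCompacts X | (K : Set X).Subsingleton} := by
  convert isClosedEmbedding_singleton.isClosed_range (X := X) using 1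
  ext K
  constructor
  · intro hK
    obtain ⟨x, hx⟩ := K.nonempty
    exact ⟨x, NonemptyCompacts.ext (hK.eq_singleton_of_mem hx).symm⟩
  · rintro ⟨x, rfl⟩
    exact subsingleton_singleton

theorem isClosed_setOf_isPreconnected [T2Space X] :
    IsClosed {K : NonemptyCompacts X | IsPreconnected (K : Set X)} := by
  refine isOpen_compl_iff.mp (isOpen_iff_forall_mem_open.mpr fun L hL => ?_)
  simp only [mem_compl_iff, mem_ofPred_eq, isPreconnected_closed_iff, not_forall] at hL
  obtain ⟨F, G, hF, hG, hLFG, hLF, hLG, hdisj⟩ := hL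
  have hLF_LG : Disjoint ((L : Set X) ∩ F) ((L : Set X) ∩ G) :=
    disjoint_left.mpr fun x hxF hxG => hdisj ⟨x, hxF.1, hxF.2, hxG.2⟩
  -- A separation of `L` by closed sets widens to one by disjoint open sets, which also
  -- separates every `K` in a Vietoris neighbourhood of `L`.
  obtain ⟨U, V, hU, hV, hFU, hGV, hUV⟩ :=
    SeparatedNhds.of_isCompact_isCompact (L.isCompact.inter_right hF)
      (L.isCompact.inter_right hG) hLF_LG
  refine ⟨{K | (K : Set X) ⊆ U ∪ V} ∩ {K | ((K : Set X) ∩ U).Nonempty} ∩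
      {K | ((K : Set X) ∩ V).Nonempty}, ?_, ?_, ?_⟩
  · rintro K ⟨⟨hKUV, hKU⟩, hKV⟩ hK
    obtain ⟨x, -, hxU, hxV⟩ := hK U V hU hV hKUV hKU hKV
    exact hUV.ne_of_mem hxU hxV rfl
  · exact ((isOpen_subsets_of_isOpen (hU.union hV)).inter
      (isOpen_inter_nonempty_of_isOpen hU)).inter (isOpen_inter_nonempty_of_isOpen hV)
  · refine ⟨⟨fun x hx => ?_, hLF.mono fun x hx => ⟨hx.1, hFU hx⟩⟩,
      hLG.mono fun x hx => ⟨hx.1, hGV hx⟩⟩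
    rcases hLFG hx with hxF | hxG
    exacts [Or.inl (hFU ⟨hx, hxF⟩), Or.inr (hGV ⟨hx, hxG⟩)]

theorem isClosed_setOf_image_subsingleton {Y : Type*} [TopologicalSpace Y] [T2Space Y]
    [LocallyCompactSpace X] :
    IsClosed {p : C(X, Y) × NonemptyCompacts X | (p.1 '' (p.2 : Set X)).Subsingleton} :=
  isClosed_setOf_subsingleton.preimage
    (continuous_snd.nonemptyCompacts_map' (g := fun p : C(X, Y) × NonemptyCompacts X => ⇑p.1)
      (by fun_prop))

end TopologicalSpace.NonemptyCompacts

theorem ContinuousMap.forall_connectedComponentIn_fiber_eq_singleton_iff {X Y : Type*}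
    [TopologicalSpace X] [CompactSpace X] [TopologicalSpace Y] [T1Space Y] (f : C(X, Y)) :
    (∀ y : Y, ∀ x ∈ f ⁻¹' {y}, connectedComponentIn (f ⁻¹' {y}) x = {x}) ↔
      ∀ K : NonemptyCompacts X, IsPreconnected (K : Set X) → (f '' K).Subsingleton →
        (K : Set X).Subsingleton := by
  constructor
  · intro h K hK hfK
    obtain ⟨x, hx⟩ := K.nonempty
    have hK_fiber : (K : Set X) ⊆ f ⁻¹' {f x} := fun z hz =>
      hfK (mem_image_of_mem f hz) (mem_image_of_mem f hx)
    refine subsingleton_of_subset_singleton (a := x) ?_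
    rw [← h (f x) x rfl]
    exact hK.subset_connectedComponentIn hx hK_fiber
  · intro h y x hx
    have hC : IsClosed (connectedComponentIn (f ⁻¹' {y}) x) :=
      (isClosed_singleton.preimage f.continuous).isClosed_connectedComponentIn x
    have hfC : (f '' connectedComponentIn (f ⁻¹' {y}) x).Subsingleton :=
      subsingleton_singleton.anti (image_subset_iff.mpr (connectedComponentIn_subset _ _))
    exact (h ⟨⟨_, hC.isCompact⟩, ⟨x, mem_connectedComponentIn hx⟩⟩
      isPreconnected_connectedComponentIn hfC).eq_singleton_of_mem (mem_connectedComponentIn hx)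

theorem stmt13_general {X Y : Type*} [MetricSpace X] [CompactSpace X]
    [MetricSpace Y] :
    IsGδ {f : C(X, Y) | ∀ y : Y, ∀ x ∈ (⇑f) ⁻¹' {y},
      connectedComponentIn ((⇑f) ⁻¹' {y}) x = {x}} := by
  have hP : IsClosed {p : C(X, Y) × NonemptyCompacts X |
      IsPreconnected (p.2 : Set X) ∧ (p.1 '' (p.2 : Set X)).Subsingleton} :=
    (NonemptyCompacts.isClosed_setOf_isPreconnected.preimage continuous_snd).inter
      NonemptyCompacts.isClosed_setOf_image_subsingleton
  convert isGδ_setOf_forall_imp_mem hP NonemptyCompacts.isClosed_setOf_subsingleton.isGδ using 1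
  ext f
  simpa only [mem_ofPred_eq, and_imp] using
    ContinuousMap.forall_connectedComponentIn_fiber_eq_singleton_iff f

theorem stmt13 {X Y : Type*} [MetricSpace X] [CompactSpace X]
    [MetricSpace Y] [CompactSpace Y] :
    IsGδ {f : C(X, Y) | ∀ y : Y, ∀ x ∈ (⇑f) ⁻¹' {y},
      connectedComponentIn ((⇑f) ⁻¹' {y}) x = {x}} :=
  stmt13_general
end

section
/- Let X be a compact metric space. For each n ≥ 1, the set A_n = { f ∈ C(X,X) : every connected component of every fiber f^{-1}(y) has diameter < 1/n } is open in C(X,X). -/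
/-!
Fix `f` whose fibre components all have diameter `< r`. For `x ∈ X` and `ε > 0`, let `Z ε` be the
set of points reachable from `x` by an `ε`-chain inside `f⁻¹ (closedBall (f x) ε)`. These are
compact sets decreasing with `ε`; their intersection lies in the fibre of `f x`, contains `x` and
is connected (a separation of it would, by compactness, separate some `Z ε` by a gap wider than
`ε`, which an `ε`-chain cannot cross). Hence it has diameter `< r`, and then so does some `Z ε`.
A preconnected set is `ε`-chain connected, so every preconnected set through a point near `x`
whose image is close to `f x` lies in `Z ε`. Compactness of `X` makes this uniform, and the
components of the fibres of any `g` uniformly close to `f` are such sets.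
-/

open Metric Set Filter Topology

section ChainComponent

variable {X : Type*} [MetricSpace X]

def chainComponent (ε : ℝ) (K : Set X) (x : X) : Set X :=
  {z | Relation.ReflTransGen (fun a b => b ∈ K ∧ dist a b < ε) x z}

variable {ε ε' : ℝ} {K K' : Set X} {x y : X}

theorem mem_chainComponent_self : x ∈ chainComponent ε K x :=
  Relation.ReflTransGen.refl

theorem chainComponent_subset_insert : chainComponent ε K x ⊆ insert x K := by
  intro z hz
  induction hz with
  | refl => exact mem_insert x K
  | tail _ hstep _ => exact mem_insert_of_mem x hstep.1

theorem chainComponent_subset (hx : x ∈ K) : chainComponent ε K x ⊆ K :=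
  fun _ hz => (chainComponent_subset_insert hz).elim (fun hzx => hzx ▸ hx) id

theorem chainComponent_mono (hε : ε ≤ ε') (hK : K ⊆ K') :
    chainComponent ε K x ⊆ chainComponent ε' K' x := fun _ hz =>
  Relation.ReflTransGen.mono (fun _ _ hstep => ⟨hK hstep.1, hstep.2.trans_le hε⟩) _ _ hz

theorem monotone_chainComponent {K : ℝ → Set X} (hK : Monotone K) (x : X) :
    Monotone fun ε => chainComponent ε (K ε) x := fun _ _ hε =>
  chainComponent_mono hε (hK hε)

theorem chainComponent_subset_of_mem (hy : y ∈ K) (hxy : dist x y < ε) :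
    chainComponent ε K y ⊆ chainComponent ε K x := fun _ hz =>
  Relation.ReflTransGen.head ⟨hy, hxy⟩ hz

theorem isClosed_chainComponent (hε : 0 < ε) (hK : IsClosed K) :
    IsClosed (chainComponent ε K x) := by
  refine isClosed_of_closure_subset fun z hz => ?_
  have hclosed : IsClosed (insert x K) := insert_eq x K ▸ isClosed_singleton.union hK
  have hz' : z ∈ insert x K := hclosed.closure_subset_iff.2 chainComponent_subset_insert hz
  obtain ⟨w, hw, hzw⟩ := Metric.mem_closure_iff.1 hz ε hε
  rcases hz' with rfl | hzK
  · exact mem_chainComponent_self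
  · exact Relation.ReflTransGen.tail hw ⟨hzK, by rwa [dist_comm]⟩

theorem IsPreconnected.subset_chainComponent {S : Set X} (hS : IsPreconnected S) (hε : 0 < ε)
    (hx : x ∈ S) : S ⊆ chainComponent ε S x := fun _ hz =>
  hS.induction₂' (fun a b => b ∈ chainComponent ε S a)
    (fun a _ => by
      filter_upwards [self_mem_nhdsWithin, mem_nhdsWithin_of_mem_nhds (ball_mem_nhds a hε)]
        with b hbS hba
      exact ⟨.single ⟨hbS, by rwa [dist_comm]⟩, .single ⟨‹a ∈ S›, hba⟩⟩)
    (fun _ _ _ _ _ _ hab hbc => hab.trans hbc) hx hz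

theorem chainComponent_subset_of_disjoint {U V : Set X} (hUV : Disjoint (thickening ε U) V)
    (hcover : chainComponent ε K x ⊆ U ∪ V) (hx : x ∈ U) : chainComponent ε K x ⊆ U := by
  intro z hz
  induction hz with
  | refl => exact hx
  | @tail a b hxa hab ha =>
    refine (hcover (hxa.tail hab)).resolve_right fun hbV => disjoint_left.1 hUV ?_ hbV
    exact mem_thickening_iff.2 ⟨a, ha, by rw [dist_comm]; exact hab.2⟩

end ChainComponent

section Compact

variable {X : Type*} [MetricSpace X]

theorem exists_diam_lt_of_diam_iInter_lt {ι : Type*} [Nonempty ι] {Z : ι → Set X}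
    (hZ : Directed (· ⊇ ·) Z) (hcpt : ∀ i, IsCompact (Z i)) {r : ℝ}
    (h : diam (⋂ i, Z i) < r) : ∃ i, diam (Z i) < r := by
  obtain ⟨r', hr', hr'r⟩ := exists_between h
  have hbdd : Bornology.IsBounded (⋂ i, Z i) :=
    (hcpt (Classical.arbitrary ι)).isBounded.subset (iInter_subset _ _)
  obtain ⟨i, hi⟩ := exists_subset_nhds_of_isCompact (V := fun i => Z i ×ˢ Z i)
    (U := {p : X × X | dist p.1 p.2 < r'})
    (fun i j => (hZ i j).imp fun _ hk => ⟨prod_mono hk.1 hk.1, prod_mono hk.2 hk.2⟩)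
    (fun i => (hcpt i).prod (hcpt i)) fun p hp => by
      have hpZ : ∀ i, p ∈ Z i ×ˢ Z i := mem_iInter.1 hp
      refine (isOpen_lt continuous_dist continuous_const).mem_nhds ?_
      exact (dist_le_diam_of_mem hbdd (mem_iInter.2 fun i => (hpZ i).1)
        (mem_iInter.2 fun i => (hpZ i).2)).trans_lt hr'
  refine ⟨i, lt_of_le_of_lt ?_ hr'r⟩
  exact diam_le_of_forall_dist_le (diam_nonneg.trans hr'.le) fun a ha b hb =>
    (hi (mk_mem_prod ha hb)).le

variable [CompactSpace X]

theorem isPreconnected_iInter_chainComponent {K : ℝ → Set X} (hmono : Monotone K)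
    (hK : ∀ ε, IsClosed (K ε)) (x : X) :
    IsPreconnected (⋂ ε : Ioi (0 : ℝ), chainComponent ε (K ε) x) := by
  set Z : Ioi (0 : ℝ) → Set X := fun ε => chainComponent ε (K ε) x
  have hZmono : Monotone Z := (monotone_chainComponent hmono x).comp (Subtype.mono_coe _)
  have hZcl : ∀ ε, IsClosed (Z ε) := fun ε => isClosed_chainComponent ε.2 (hK ε)
  have hxC : x ∈ ⋂ ε, Z ε := mem_iInter.2 fun _ => mem_chainComponent_self
  rw [isPreconnected_iff_subset_of_fully_disjoint_closed (isClosed_iInter hZcl)]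
  suffices H : ∀ u v, IsClosed u → IsClosed v → ⋂ ε, Z ε ⊆ u ∪ v → Disjoint u v → x ∈ u →
      ⋂ ε, Z ε ⊆ u by
    intro u v hu hv hcover huv
    rcases hcover hxC with hxu | hxv
    · exact Or.inl (H u v hu hv hcover huv hxu)
    · exact Or.inr (H v u hv hu (union_comm u v ▸ hcover) huv.symm hxv)
  intro u v hu hv hcover huv hxu
  obtain ⟨δ, hδ, hsep⟩ := huv.exists_thickenings hu.isCompact hv
  set U := thickening (δ / 2) u
  set V := thickening (δ / 2) v
  have hUV : Disjoint U V :=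
    hsep.mono (thickening_mono (half_le_self hδ.le) u) (thickening_mono (half_le_self hδ.le) v)
  -- a gap between `U` and `V` that chains with steps `< δ / 2` cannot cross
  have hgap : Disjoint (thickening (δ / 2) U) V := hsep.mono
    ((thickening_thickening_subset _ _ u).trans_eq (by rw [add_halves]))
    (thickening_mono (half_le_self hδ.le) v)
  obtain ⟨ε₀, hε₀⟩ := exists_subset_nhds_of_isCompact' hZmono.directed_ge
    (fun ε => (hZcl ε).isCompact) hZcl (U := U ∪ V) fun z hz =>
      (isOpen_thickening.union isOpen_thickening).mem_nhds <| (hcover hz).imp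
        (fun hzu => self_subset_thickening (half_pos hδ) u hzu)
        (fun hzv => self_subset_thickening (half_pos hδ) v hzv)
  let ε : Ioi (0 : ℝ) := ⟨min ε₀ (δ / 2), lt_min ε₀.2 (half_pos hδ)⟩
  have hZU : Z ε ⊆ U :=
    chainComponent_subset_of_disjoint (hgap.mono_left (thickening_mono (min_le_right _ _) U))
      ((hZmono (min_le_left ε₀.1 _)).trans hε₀) (self_subset_thickening (half_pos hδ) u hxu)
  intro z hz
  exact (hcover hz).resolve_right fun hzv => disjoint_left.1 hUV (hZU (mem_iInter.1 hz ε))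
    (self_subset_thickening (half_pos hδ) v hzv)

variable {Y : Type*} [MetricSpace Y] {f : X → Y}

theorem exists_diam_chainComponent_lt (hf : Continuous f) {x : X} {r : ℝ}
    (h : diam (connectedComponentIn (f ⁻¹' {f x}) x) < r) :
    ∃ ε > 0, diam (chainComponent ε (f ⁻¹' closedBall (f x) ε) x) < r := by
  set K : ℝ → Set X := fun ε => f ⁻¹' closedBall (f x) ε
  have hmono : Monotone K := fun _ _ hε => preimage_mono (closedBall_subset_closedBall hε)
  have hK : ∀ ε, IsClosed (K ε) := fun _ => isClosed_closedBall.preimage hf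
  set Z : Ioi (0 : ℝ) → Set X := fun ε => chainComponent ε (K ε) x
  have hCfiber : ⋂ ε, Z ε ⊆ f ⁻¹' {f x} := fun z hz =>
    eq_of_forall_dist_le fun ε hε => chainComponent_subset
      (show x ∈ K ε from mem_closedBall_self hε.le) (mem_iInter.1 hz ⟨ε, hε⟩)
  have hC : ⋂ ε, Z ε ⊆ connectedComponentIn (f ⁻¹' {f x}) x :=
    (isPreconnected_iInter_chainComponent hmono hK x).subset_connectedComponentIn
      (mem_iInter.2 fun _ => mem_chainComponent_self) hCfiber
  obtain ⟨ε, hε⟩ := exists_diam_lt_of_diam_iInter_lt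
    (((monotone_chainComponent hmono x).comp (Subtype.mono_coe _)).directed_ge)
    (fun ε => (isClosed_chainComponent ε.2 (hK ε)).isCompact)
    ((diam_mono hC isBounded_of_compactSpace).trans_lt h)
  exact ⟨ε, ε.2, hε⟩

theorem exists_forall_diam_lt_of_subset_preimage_closedBall (hf : Continuous f) {r : ℝ}
    (h : ∀ x, diam (connectedComponentIn (f ⁻¹' {f x}) x) < r) :
    ∃ δ > 0, ∀ x S, IsPreconnected S → x ∈ S → S ⊆ f ⁻¹' closedBall (f x) δ → diam S < r := by
  have hev : ∀ᶠ δ in 𝓝 (0 : ℝ), ∀ x ∈ univ, ∀ S : Set X, IsPreconnected S → x ∈ S →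
      S ⊆ f ⁻¹' closedBall (f x) δ → diam S < r := by
    refine isCompact_univ.eventually_forall_of_forall_eventually fun x₀ _ => ?_
    obtain ⟨ε, hε, hdiam⟩ := exists_diam_chainComponent_lt hf (h x₀)
    have hnear : ∀ᶠ x in 𝓝 x₀, dist x x₀ < ε ∧ dist (f x) (f x₀) < ε / 2 :=
      Eventually.and (ball_mem_nhds x₀ hε)
        (hf.continuousAt.eventually (ball_mem_nhds _ (half_pos hε)))
    rw [nhds_prod_eq]
    filter_upwards [(eventually_lt_nhds (half_pos hε)).prod_mk hnear]
      with ⟨δ, x⟩ ⟨hδ, hxx₀, hfx⟩ S hS hxS hSδ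
    have hSK : S ⊆ f ⁻¹' closedBall (f x₀) ε := fun z hz => calc
      dist (f z) (f x₀) ≤ dist (f z) (f x) + dist (f x) (f x₀) := dist_triangle _ _ _
      _ ≤ ε := by linarith [mem_closedBall.1 (hSδ hz)]
    calc diam S ≤ diam (chainComponent ε (f ⁻¹' closedBall (f x₀) ε) x₀) := by
          refine diam_mono ?_ isBounded_of_compactSpace
          exact ((hS.subset_chainComponent hε hxS).trans (chainComponent_mono le_rfl hSK)).trans
            (chainComponent_subset_of_mem (hSK hxS) (by rwa [dist_comm]))
      _ < r := hdiam
  obtain ⟨δ, hδ, hδr⟩ := Metric.eventually_nhds_iff.1 hev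
  refine ⟨δ / 2, half_pos hδ, fun x => hδr ?_ x (mem_univ x)⟩
  rw [Real.dist_0_eq_abs, abs_of_pos (half_pos hδ)]
  exact half_lt_self hδ

end Compact

theorem stmt14_general {X : Type*} [MetricSpace X] [CompactSpace X] (n : ℕ) :
    IsOpen {f : C(X, X) | ∀ y : X, ∀ x ∈ (⇑f) ⁻¹' {y},
      Metric.diam (connectedComponentIn ((⇑f) ⁻¹' {y}) x) < 1 / (n:ℝ)} := by
  refine Metric.isOpen_iff.2 fun f hf => ?_
  obtain ⟨δ, hδ, hsmall⟩ :=
    exists_forall_diam_lt_of_subset_preimage_closedBall f.continuous fun x => hf (f x) x rfl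
  refine ⟨δ / 2, half_pos hδ, fun g hg y x hx => ?_⟩
  have hgf : ∀ z, dist (g z) (f z) < δ / 2 := (ContinuousMap.dist_lt_iff (half_pos hδ)).1 hg
  refine hsmall x _ isPreconnected_connectedComponentIn (mem_connectedComponentIn hx) ?_
  intro z hz
  have hgz : g z = g x := (connectedComponentIn_subset _ _ hz).trans hx.symm
  calc dist (f z) (f x) ≤ dist (f z) (g z) + dist (g x) (f x) := hgz ▸ dist_triangle _ _ _
    _ ≤ δ := by linarith [dist_comm (f z) (g z), hgf z, hgf x]

theorem stmt14 {X : Type*} [MetricSpace X] [CompactSpace X] (n : ℕ) (hn : 1 ≤ n) :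
    IsOpen {f : C(X, X) | ∀ y : X, ∀ x ∈ (⇑f) ⁻¹' {y},
      Metric.diam (connectedComponentIn ((⇑f) ⁻¹' {y}) x) < 1 / (n:ℝ)} :=
  stmt14_general n
end

section
/- Let X be a compact metric space with the property: for each integer m ≥ 1 there is a continuous map p : X → X with image Y = p(X) such that sup_x d(p(x), x) < 1/m and { g ∈ C(Y,Y) : all fibers of g are zero-dimensional } is dense in C(Y,Y). Then { f ∈ C(X,X) : all fibers of f are zero-dimensional } is dense (hence, being Gδ, residual) in C(X,X). -/
/-!
For `c > 0` let `W c` be the set of `f ∈ C(X, X)` for which some `δ > 0` forces every preconnected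
set on which `f` oscillates by at most `δ` to have oscillation at most `c`. Each `W c` is open, and a
map lying in every `W (1 / (n + 1))` has zero-dimensional fibres, so by Baire it suffices to show
that `W c` is dense. A map `g` that is continuous on a compact set `Y` and has zero-dimensional
fibres there is in `W c` on `Y`: otherwise the limit superior of a sequence of bad preconnected sets
would be a preconnected subset of a single fibre containing two points at distance `≥ c`. Given `f`,
take `p` with image `Y` uniformly close to the identity and such a `g` close to `p ∘ f` on `Y`;
then `g ∘ p` is close to `f` and lies in `W c`.
-/

open Metric Set Filter Topology

section Limsup

variable {X : Type*} [TopologicalSpace X]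

theorem mem_iInter_closure_iUnion_ge {A : ℕ → Set X} {a : ℕ → X} {x : X}
    (ha : ∀ k, a k ∈ A k) (hx : Tendsto a atTop (𝓝 x)) :
    x ∈ ⋂ N, closure (⋃ k ≥ N, A k) :=
  mem_iInter.2 fun N =>
    mem_closure_of_tendsto hx (eventually_atTop.2 ⟨N, fun k hk => mem_biUnion hk (ha k)⟩)

theorem iInter_closure_iUnion_ge_subset {A : ℕ → Set X} {K : Set X} (hK : IsClosed K)
    (hAK : ∀ k, A k ⊆ K) : ⋂ N, closure (⋃ k ≥ N, A k) ⊆ K := fun _ hx =>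
  closure_minimal (iUnion₂_subset fun k _ => hAK k) hK (mem_iInter.1 hx 0)

theorem antitone_closure_iUnion_ge (A : ℕ → Set X) :
    Antitone fun N => closure (⋃ k ≥ N, A k) := fun _ _ hMN =>
  closure_mono (biUnion_subset_biUnion_left fun _ hk => le_trans hMN hk)

theorem isPreconnected_iInter_closure_iUnion_ge [CompactSpace X] [NormalSpace X]
    {A : ℕ → Set X} {a : ℕ → X} {x : X} (hA : ∀ k, IsPreconnected (A k))
    (ha : ∀ k, a k ∈ A k) (hx : Tendsto a atTop (𝓝 x)) :
    IsPreconnected (⋂ N, closure (⋃ k ≥ N, A k)) := by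
  set L := ⋂ N, closure (⋃ k ≥ N, A k)
  rw [isPreconnected_iff_subset_of_fully_disjoint_closed (isClosed_iInter fun _ => isClosed_closure)]
  suffices ∀ P Q : Set X, IsClosed P → IsClosed Q → L ⊆ P ∪ Q → Disjoint P Q → x ∈ P → L ⊆ P by
    intro P Q hP hQ hcov hPQ
    rcases hcov (mem_iInter_closure_iUnion_ge ha hx) with hxP | hxQ
    · exact .inl (this P Q hP hQ hcov hPQ hxP)
    · exact .inr (this Q P hQ hP (union_comm P Q ▸ hcov) hPQ.symm hxQ)
  intro P Q hP hQ hcov hPQ hxP y hyL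
  by_contra hyP
  obtain ⟨U, V, hU, hV, hPU, hQV, hUV⟩ := normal_separation hP hQ hPQ
  obtain ⟨N, hN⟩ : ∃ N, closure (⋃ k ≥ N, A k) ⊆ U ∪ V :=
    exists_subset_nhds_of_isCompact' (antitone_closure_iUnion_ge A).directed_ge
      (fun _ => isClosed_closure.isCompact) (fun _ => isClosed_closure)
      fun z hz => (hU.union hV).mem_nhds ((hcov hz).imp (@hPU z) (@hQV z))
  obtain ⟨M, hM⟩ : ∃ M, ∀ k ≥ M, A k ⊆ U := eventually_atTop.1 <| by
    filter_upwards [eventually_ge_atTop N, hx.eventually (hU.mem_nhds (hPU hxP))] with k hkN hkU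
    refine (hA k).subset_left_of_subset_union hU hV hUV ?_ ⟨a k, ha k, hkU⟩
    exact (subset_biUnion_of_mem (u := A) le_rfl).trans
      (subset_closure.trans ((antitone_closure_iUnion_ge A hkN).trans hN))
  have hyU : y ∈ closure U :=
    closure_mono (iUnion₂_subset hM) (mem_iInter.1 hyL M)
  exact (hUV.closure_left hV).ne_of_mem hyU (hQV ((hcov hyL).resolve_left hyP)) rfl

theorem ContinuousOn.eq_of_mem_iInter_closure_iUnion_ge {Y : Type*} [MetricSpace Y]
    {K : Set X} {g : X → Y} (hg : ContinuousOn g K) (hK : IsClosed K) {A : ℕ → Set X}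
    (hAK : ∀ k, A k ⊆ K) {y : Y} (hAy : ∀ ε > 0, ∀ᶠ k in atTop, g '' A k ⊆ closedBall y ε)
    {x : X} (hx : x ∈ ⋂ N, closure (⋃ k ≥ N, A k)) : g x = y := by
  have hxK : x ∈ K := iInter_closure_iUnion_ge_subset hK hAK hx
  refine eq_of_forall_dist_le fun ε hε => ?_
  obtain ⟨N, hN⟩ := eventually_atTop.1 (hAy ε hε)
  have hgx : g x ∈ closure (g '' ⋃ k ≥ N, A k) :=
    ((hg x hxK).mono (iUnion₂_subset fun k _ => hAK k)).mem_closure_image (mem_iInter.1 hx N)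
  refine closure_minimal ?_ isClosed_closedBall hgx
  simpa only [image_iUnion₂, iUnion₂_subset_iff] using fun k hk => hN k hk

end Limsup

/-- A uniform version of "the components of the fibres of `f` on `K` have diameter `≤ c`". -/
def PreconnectedControlled {X Y : Type*} [PseudoMetricSpace X] [PseudoMetricSpace Y]
    (f : X → Y) (K : Set X) (c : ℝ) : Prop :=
  ∃ δ > 0, ∀ A ⊆ K, IsPreconnected A → (∀ a ∈ A, ∀ b ∈ A, dist (f a) (f b) ≤ δ) →
    ∀ a ∈ A, ∀ b ∈ A, dist a b ≤ c

section Control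

variable {X Y : Type*} [MetricSpace X] [MetricSpace Y]

theorem ContinuousOn.preconnectedControlled [CompactSpace X] {K : Set X} (hK : IsClosed K)
    {g : X → Y} (hg : ContinuousOn g K)
    (hfib : ∀ x ∈ K, connectedComponentIn {z ∈ K | g z = g x} x = {x}) {c : ℝ} (hc : 0 < c) :
    PreconnectedControlled g K c := by
  by_contra hcon
  simp only [PreconnectedControlled, not_exists, not_and, not_forall, not_le] at hcon
  choose A hAK hA hAg a ha b hb hab using fun k : ℕ => hcon (1 / (k + 1)) Nat.one_div_pos_of_nat
  obtain ⟨⟨α, β⟩, φ, hφ, hlim⟩ := SeqCompactSpace.tendsto_subseq fun k => (a k, b k)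
  have hα : Tendsto (a ∘ φ) atTop (𝓝 α) := (continuous_fst.tendsto _).comp hlim
  have hβ : Tendsto (b ∘ φ) atTop (𝓝 β) := (continuous_snd.tendsto _).comp hlim
  set L := ⋂ N, closure (⋃ k ≥ N, A (φ k))
  have hαL : α ∈ L := mem_iInter_closure_iUnion_ge (fun k => ha (φ k)) hα
  have hαK : α ∈ K := iInter_closure_iUnion_ge_subset hK (fun k => hAK _) hαL
  have hgA : ∀ ε > 0, ∀ᶠ k in atTop, g '' A (φ k) ⊆ closedBall (g α) ε := by
    intro ε hε
    have hga : Tendsto (g ∘ a ∘ φ) atTop (𝓝 (g α)) :=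
      (hg α hαK).tendsto.comp (tendsto_nhdsWithin_iff.2 ⟨hα, .of_forall fun k => hAK _ (ha _)⟩)
    have hosc : Tendsto (fun k => 1 / ((φ k : ℝ) + 1)) atTop (𝓝 0) :=
      tendsto_one_div_add_atTop_nhds_zero_nat.comp hφ.tendsto_atTop
    filter_upwards [hga.eventually (closedBall_mem_nhds _ (half_pos hε)),
      hosc.eventually (ge_mem_nhds (half_pos hε))] with k hk hk'
    rintro _ ⟨z, hz, rfl⟩
    have := hAg (φ k) z hz (a (φ k)) (ha _)
    rw [mem_closedBall]
    simp only [Function.comp_apply] at hk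
    linarith [dist_triangle (g z) (g (a (φ k))) (g α)]
  have hLα : L ⊆ connectedComponentIn {z ∈ K | g z = g α} α :=
    (isPreconnected_iInter_closure_iUnion_ge (fun k => hA (φ k)) (fun k => ha (φ k)) hα
      ).subset_connectedComponentIn hαL fun x hx =>
        ⟨iInter_closure_iUnion_ge_subset hK (fun k => hAK _) hx,
          hg.eq_of_mem_iInter_closure_iUnion_ge hK (fun k => hAK _) hgA hx⟩
  rw [hfib α hαK] at hLα
  have hβα : β = α := hLα (mem_iInter_closure_iUnion_ge (fun k => hb (φ k)) hβ)
  have hc' : c ≤ dist α β := ge_of_tendsto' (hα.dist hβ) fun k => (hab (φ k)).le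
  rw [hβα, dist_self] at hc'
  exact hc.not_ge hc'

theorem PreconnectedControlled.comp {g : X → Y} {p : X → X} {c r : ℝ}
    (hg : PreconnectedControlled g (range p) c) (hp : Continuous p) (hpr : ∀ x, dist (p x) x ≤ r) :
    PreconnectedControlled (g ∘ p) univ (c + 2 * r) := by
  obtain ⟨δ, hδ, hgδ⟩ := hg
  refine ⟨δ, hδ, fun A _ hA hAδ a ha b hb => ?_⟩
  have hpab : dist (p a) (p b) ≤ c :=
    hgδ (p '' A) (image_subset_range p A) (hA.image p hp.continuousOn)
      (forall_mem_image.2 fun x hx => forall_mem_image.2 fun y hy => hAδ x hx y hy)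
      _ (mem_image_of_mem p ha) _ (mem_image_of_mem p hb)
  calc dist a b ≤ dist a (p a) + dist (p a) (p b) + dist (p b) b := dist_triangle4 ..
    _ ≤ c + 2 * r := by linarith [hpr a, hpr b, dist_comm a (p a)]

theorem isOpen_setOf_preconnectedControlled [CompactSpace X] (c : ℝ) :
    IsOpen {f : C(X, Y) | PreconnectedControlled f univ c} := by
  refine Metric.isOpen_iff.2 fun f ⟨δ, hδ, hfδ⟩ => ⟨δ / 4, by positivity, fun f' hf' => ?_⟩
  refine ⟨δ / 2, by positivity, fun A hAK hA hAδ => hfδ A hAK hA fun a ha b hb => ?_⟩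
  have hf'f : ∀ x, dist (f x) (f' x) < δ / 4 := fun x =>
    (ContinuousMap.dist_apply_le_dist x).trans_lt (mem_ball'.1 hf')
  calc dist (f a) (f b) ≤ dist (f a) (f' a) + dist (f' a) (f' b) + dist (f' b) (f b) :=
        dist_triangle4 ..
    _ ≤ δ := by linarith [hf'f a, hf'f b, hAδ a ha b hb, dist_comm (f' b) (f b)]

theorem connectedComponentIn_preimage_singleton_eq_singleton {f : X → Y}
    (hf : ∀ n : ℕ, PreconnectedControlled f univ (1 / (n + 1))) {x : X} (y : Y)
    (hx : x ∈ f ⁻¹' {y}) : connectedComponentIn (f ⁻¹' {y}) x = {x} := by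
  refine Subsingleton.eq_singleton_of_mem (fun u hu v hv => ?_) (mem_connectedComponentIn hx)
  have hfC : ∀ z ∈ connectedComponentIn (f ⁻¹' {y}) x, f z = y := fun z hz =>
    connectedComponentIn_subset (f ⁻¹' {y}) x hz
  refine dist_le_zero.1 (ge_of_tendsto' tendsto_one_div_add_atTop_nhds_zero_nat fun n => ?_)
  obtain ⟨δ, hδ, hfδ⟩ := hf n
  refine hfδ _ (subset_univ _) isPreconnected_connectedComponentIn (fun s hs t ht => ?_) u hu v hv
  rw [hfC s hs, hfC t ht, dist_self]
  exact hδ.le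

end Control

section Density

variable {X : Type*} [MetricSpace X]

/-- Self-maps of `Y` are encoded as maps `X → X` that are continuous on `Y` and map `Y` into `Y`. -/
def ZeroDimFiberMapsDenseOn (Y : Set X) : Prop :=
  ∀ g : X → X, ContinuousOn g Y → MapsTo g Y Y →
    ∀ δ > (0:ℝ), ∃ g' : X → X, ContinuousOn g' Y ∧ MapsTo g' Y Y ∧ (∀ x ∈ Y, dist (g x) (g' x) < δ) ∧
      ∀ y ∈ Y, ∀ x ∈ {z ∈ Y | g' z = y}, connectedComponentIn {z ∈ Y | g' z = y} x = {x}

theorem dense_setOf_preconnectedControlled [CompactSpace X]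
    (h : ∀ η > 0, ∃ p : X → X, Continuous p ∧ (∀ x, dist (p x) x < η) ∧
      ZeroDimFiberMapsDenseOn (range p)) {c : ℝ} (hc : 0 < c) :
    Dense {f : C(X, X) | PreconnectedControlled f univ c} := by
  refine Metric.dense_iff.2 fun f ε hε => ?_
  obtain ⟨η, hη, hfη⟩ := Metric.uniformContinuous_iff.1
    (CompactSpace.uniformContinuous_of_continuous f.continuous) (ε / 3) (by positivity)
  obtain ⟨p, hp, hpη, hpY⟩ := h (min η (min (ε / 3) (c / 4))) (by positivity)
  obtain ⟨g, hgc, hgY, hgf, hgfib⟩ := hpY (p ∘ f) (hp.comp f.continuous).continuousOn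
    (fun x _ => mem_range_self _) (ε / 3) (by positivity)
  have hg : PreconnectedControlled g (range p) (c / 2) :=
    hgc.preconnectedControlled (isCompact_range hp).isClosed
      (fun x hx => hgfib _ (hgY hx) x ⟨hx, rfl⟩) (by positivity)
  refine ⟨⟨g ∘ p, hgc.comp_continuous hp mem_range_self⟩, ?_, ?_⟩
  · refine mem_ball.2 ((ContinuousMap.dist_lt_iff hε).2 fun x => ?_)
    have h₁ := hgf (p x) (mem_range_self x)
    have h₂ : dist (p (f (p x))) (f (p x)) < ε / 3 :=
      (hpη _).trans_le ((min_le_right _ _).trans (min_le_left _ _))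
    have h₃ : dist (f (p x)) (f x) < ε / 3 := hfη ((hpη x).trans_le (min_le_left _ _))
    calc dist (g (p x)) (f x)
        ≤ dist (g (p x)) (p (f (p x))) + dist (p (f (p x))) (f (p x)) + dist (f (p x)) (f x) :=
          dist_triangle4 ..
      _ < ε := by
          rw [dist_comm] at h₁
          simp only [Function.comp_apply] at h₁
          linarith
  · have hpc : ∀ x, dist (p x) x ≤ c / 4 := fun x =>
      (hpη x).le.trans ((min_le_right _ _).trans (min_le_right _ _))
    have := hg.comp hp hpc
    rwa [show c / 2 + 2 * (c / 4) = c by ring] at this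

end Density

theorem stmt15 {X : Type*} [MetricSpace X] [CompactSpace X]
    (h : ∀ m : ℕ, 1 ≤ m → ∃ p : X → X, Continuous p ∧
      (∀ x, dist (p x) x < 1 / (m:ℝ)) ∧
      -- maps with zero-dimensional fibers are dense among self-maps of Y = range p:
      ∀ g : X → X, ContinuousOn g (range p) → MapsTo g (range p) (range p) →
        ∀ δ > (0:ℝ), ∃ g' : X → X, ContinuousOn g' (range p) ∧
          MapsTo g' (range p) (range p) ∧ (∀ x ∈ range p, dist (g x) (g' x) < δ) ∧
          ∀ y ∈ range p, ∀ x ∈ {z ∈ range p | g' z = y},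
            connectedComponentIn {z ∈ range p | g' z = y} x = {x}) :
    Dense {f : C(X, X) | ∀ y : X, ∀ x ∈ (⇑f) ⁻¹' {y},
      connectedComponentIn ((⇑f) ⁻¹' {y}) x = {x}} := by
  have h' : ∀ η > 0, ∃ p : X → X, Continuous p ∧ (∀ x, dist (p x) x < η) ∧
      ZeroDimFiberMapsDenseOn (range p) := fun η hη => by
    obtain ⟨m, hm⟩ := exists_nat_one_div_lt hη
    obtain ⟨p, hp, hpm, hpY⟩ := h (m + 1) (by omega)
    exact ⟨p, hp, fun x => (hpm x).trans (by exact_mod_cast hm), hpY⟩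
  have hW : Dense (⋂ n : ℕ, {f : C(X, X) | PreconnectedControlled f univ (1 / (n + 1))}) :=
    dense_iInter_of_isOpen (fun _ => isOpen_setOf_preconnectedControlled _)
      fun _ => dense_setOf_preconnectedControlled h' Nat.one_div_pos_of_nat
  exact hW.mono fun f hf y _ hx =>
    connectedComponentIn_preimage_singleton_eq_singleton (mem_iInter.1 hf) y hx
end

section
/- Let X be a compact metric space, f : X → X continuous, and suppose U_0, U_1, …, U_k are nonempty open sets with pairwise disjoint closures such that f(closure U_i) ⊆ U_{i+1 mod (k+1)} for all i. Then for each i, CR(f) ∩ closure(U_i) ≠ ∅; in fact f^{k+1} maps closure(U_i) into U_i and the chain recurrent set of f^{k+1} restricted to closure(U_i) is nonempty, and chain recurrent points of f^{k+1}|closure(U_i) are chain recurrent points of f. -/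
open Metric Set Filter

variable {X : Type*} [MetricSpace X]

/-! `f^[k+1]` maps the compact set `closure (U i)` into itself, so the orbit of
any of its points has an ω-limit point `y` there. An orbit segment running from near `y` back to
near `y` closes up into an `ε`-chain of `f^[k+1]` through `y`, and each step of such a chain
unfolds into `k+1` steps of `f`, only the last of which carries an error. -/

theorem Set.mapsTo_iterate_of_mapsTo_succ {α ι : Type*} [AddMonoidWithOne ι] {f : α → α}
    {S : ι → Set α} (h : ∀ i, MapsTo f (S i) (S (i + 1))) (m : ℕ) (i : ι) :
    MapsTo f^[m] (S i) (S (i + m)) := by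
  induction m generalizing i with
  | zero => simpa using mapsTo_id (S i)
  | succ m ih =>
    rw [Function.iterate_succ', Nat.cast_succ, ← add_assoc]
    exact (h _).comp (ih i)

/-- Replacing the two endpoints of the orbit segment `z, g z, …, g^[N] z` by `y` gives a chain,
whose only errors sit at the first and the last step. -/
theorem exists_chain_of_near_return {g : X → X} {A : Set X} (hmap : MapsTo g A A)
    {y z : X} (hy : y ∈ A) (hz : z ∈ A) {N : ℕ} (hN : 2 ≤ N) {ε : ℝ} (hε : 0 < ε)
    (hfirst : dist (g y) (g z) < ε) (hlast : dist (g^[N] z) y < ε) :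
    ∃ c : ℕ → X, (∀ i ≤ N, c i ∈ A) ∧ c 0 = y ∧ c N = y ∧
      ∀ i < N, dist (g (c i)) (c (i + 1)) < ε := by
  refine ⟨fun j => if j = 0 ∨ j = N then y else g^[j] z, ?_, by simp, by simp, ?_⟩
  · intro i _
    dsimp only
    split_ifs
    exacts [hy, hmap.iterate i hz]
  · intro i hi
    rcases Nat.eq_zero_or_pos i with rfl | hi0
    · simpa [show 1 ≠ N by omega] using hfirst
    · dsimp only
      rw [if_neg (by omega), ← Function.iterate_succ_apply' g]
      by_cases hend : i + 1 = N
      · rw [if_pos (Or.inr hend)]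
        rwa [Nat.succ_eq_add_one, hend]
      · rw [if_neg (by omega)]
        simpa using hε

theorem mem_chainRecIn_of_mapClusterPt {g : X → X} (hg : Continuous g) {A : Set X}
    (hmap : MapsTo g A A) {x y : X} (hx : x ∈ A) (hyA : y ∈ A)
    (hy : MapClusterPt y atTop (fun n => g^[n] x)) : y ∈ ChainRecIn g A := by
  refine ⟨hyA, fun ε hε => ?_⟩
  obtain ⟨δ, hδ, hgδ⟩ := Metric.continuous_iff.1 hg y ε hε
  have hnear : ∃ᶠ n in atTop, g^[n] x ∈ ball y (min δ ε) :=
    hy.frequently (ball_mem_nhds y (lt_min hδ hε))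
  obtain ⟨n, -, hn⟩ := frequently_atTop.1 hnear 0
  obtain ⟨m, hnm, hm⟩ := frequently_atTop.1 hnear (n + 2)
  have hfirst : dist (g y) (g (g^[n] x)) < ε := by
    rw [dist_comm]
    exact hgδ _ (lt_of_lt_of_le hn (min_le_left _ _))
  have hlast : dist (g^[m - n] (g^[n] x)) y < ε := by
    rw [← Function.iterate_add_apply, Nat.sub_add_cancel (by omega)]
    exact lt_of_lt_of_le hm (min_le_right _ _)
  obtain ⟨c, hc⟩ := exists_chain_of_near_return hmap hyA (hmap.iterate n hx)
    (by omega : 2 ≤ m - n) hε hfirst hlast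
  exact ⟨m - n, by omega, c, hc⟩

theorem chainRecIn_nonempty {g : X → X} (hg : Continuous g) {A : Set X}
    (hA : IsCompact A) (hne : A.Nonempty) (hmap : MapsTo g A A) :
    (ChainRecIn g A).Nonempty := by
  obtain ⟨x, hx⟩ := hne
  obtain ⟨y, hyA, hy⟩ := hA.exists_clusterPt (f := map (fun n => g^[n] x) atTop)
    (tendsto_principal.2 (.of_forall fun n => hmap.iterate n hx))
  exact ⟨y, mem_chainRecIn_of_mapClusterPt hg hmap hx hyA hy⟩

theorem chainRecIn_iterate_subset_chainRec (f : X → X) {K : ℕ} (hK : 0 < K) (A : Set X) :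
    ChainRecIn (f^[K]) A ⊆ ChainRec f := by
  rintro x ⟨-, hx⟩ ε hε
  obtain ⟨n, hn, c, -, hc0, hcn, hstep⟩ := hx ε hε
  refine ⟨n * K, Nat.mul_pos hn hK, fun i => f^[i % K] (c (i / K)), by simp [hc0],
    by simp [Nat.mul_div_cancel _ hK, hcn], fun i hi => ?_⟩
  have hq : i / K < n := (Nat.div_lt_iff_lt_mul hK).2 hi
  have hmod_add_div : i % K + K * (i / K) = i := Nat.mod_add_div i K
  have hr : i % K < K := Nat.mod_lt i hK
  simp only [← Function.iterate_succ_apply' f]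
  rcases Nat.lt_or_ge (i % K + 1) K with hlt | hge
  · obtain ⟨hdiv, hmod⟩ := (Nat.div_mod_unique hK).2 (⟨by omega, hlt⟩ :
      i % K + 1 + K * (i / K) = i + 1 ∧ _)
    simpa [hdiv, hmod] using hε
  · obtain ⟨hdiv, hmod⟩ := (Nat.div_mod_unique hK).2 (⟨by rw [mul_add_one]; omega, hK⟩ :
      0 + K * (i / K + 1) = i + 1 ∧ _)
    rw [hdiv, hmod, Nat.succ_eq_add_one, show i % K + 1 = K by omega]
    exact hstep _ hq

theorem stmt16_general [CompactSpace X] (f : X → X) (hf : Continuous f) (k : ℕ)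
    (U : Fin (k+1) → Set X) (hne : ∀ i, (U i).Nonempty)
    (hfU : ∀ i, f '' closure (U i) ⊆ U (i + 1)) :
    ∀ i, MapsTo (f^[k+1]) (closure (U i)) (U i) ∧
      (ChainRecIn (f^[k+1]) (closure (U i))).Nonempty ∧
      ChainRecIn (f^[k+1]) (closure (U i)) ⊆ ChainRec f ∧
      (ChainRec f ∩ closure (U i)).Nonempty := by
  open Fin.NatCast in
  intro i
  have hreturn : MapsTo (f^[k+1]) (closure (U i)) (U i) := by
    have hcycle j : MapsTo f (closure (U j)) (closure (U (j + 1))) :=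
      (mapsTo_iff_image_subset.2 (hfU j)).mono_right subset_closure
    have hfU' := mapsTo_iff_image_subset.2 (hfU (i + k))
    rw [add_assoc, ← Nat.cast_succ, Fin.natCast_self, add_zero] at hfU'
    rw [Function.iterate_succ']
    exact hfU'.comp (mapsTo_iterate_of_mapsTo_succ hcycle k i)
  have hsub := chainRecIn_iterate_subset_chainRec f k.succ_pos (closure (U i))
  obtain ⟨x, hx⟩ := chainRecIn_nonempty (hf.iterate _) isClosed_closure.isCompact
    (hne i).closure (hreturn.mono_right subset_closure)
  exact ⟨hreturn, ⟨x, hx⟩, hsub, x, hsub hx, hx.1⟩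

theorem stmt16 [CompactSpace X] (f : X → X) (hf : Continuous f) (k : ℕ)
    (U : Fin (k+1) → Set X) (hne : ∀ i, (U i).Nonempty) (hop : ∀ i, IsOpen (U i))
    (hdisj : ∀ i j, i ≠ j → closure (U i) ∩ closure (U j) = ∅)
    (hfU : ∀ i, f '' closure (U i) ⊆ U (i + 1)) :
    ∀ i, MapsTo (f^[k+1]) (closure (U i)) (U i) ∧
      (ChainRecIn (f^[k+1]) (closure (U i))).Nonempty ∧
      ChainRecIn (f^[k+1]) (closure (U i)) ⊆ ChainRec f ∧
      (ChainRec f ∩ closure (U i)).Nonempty :=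
  stmt16_general f hf k U hne hfU
end
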